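/- arXiv:1006.4387 — 3 statements merged into one kernel-verified Lean document; each statement's English description precedes it below -/
import Mathlib

section
/- Let X be a countable set, p a stochastic matrix on X with k-step transition probabilities p^k, B ⊆ X a subset, and V : X → ℝ a nonnegative function with ∑_y p^l(x,y) V(y) < ∞ for all x and l, and with ∑_y p^l(x,y)|Δ^1 V(y)| < ∞ for all x and l. Suppose there are constants ε > 0 and η ≥ 0 such that Δ^1 V(y) ≤ η for all y ∈ X and Δ^1 V(y) ≤ −ε for all y ∉ B. Fix an integer k ≥ 1 and a state x ∈ X such that p^l(x,y) = 0 for every y ∈ B and every 0 ≤ l ≤ k−1 (i.e., starting from x the chain cannot be in B during the first k−1 steps). Then Δ^k V(x) ≤ −k ε. -/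
open scoped BigOperators Classical

/-- `kstep p k x y` is the `k`-step transition probability from `x` to `y`. -/
noncomputable def kstep {X : Type*} (p : X → X → ℝ) : ℕ → X → X → ℝ
  | 0 => fun x y => if x = y then (1 : ℝ) else 0
  | (k + 1) => fun x y => ∑' z, p x z * kstep p k z y

/-- The `k`-step drift of a function `V` at state `x`. -/
noncomputable def drift {X : Type*} (p : X → X → ℝ) (k : ℕ) (V : X → ℝ) (x : X) : ℝ :=
  (∑' y, kstep p k x y * V y) - V x

set_option linter.unusedSectionVars false
set_option maxHeartbeats 1000000

section Aux

variable {X : Type*} [Countable X] (p : X → X → ℝ)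

lemma kstep_zero (x y : X) : kstep p 0 x y = if x = y then (1 : ℝ) else 0 := rfl

lemma kstep_succ_def (k : ℕ) (x y : X) :
    kstep p (k + 1) x y = ∑' z, p x z * kstep p k z y := rfl

lemma kstep_nonneg (hp : ∀ x y, 0 ≤ p x y) : ∀ (l : ℕ) (x y : X), 0 ≤ kstep p l x y := by
  intro l
  induction l with
  | zero => intro x y; rw [kstep_zero]; split <;> norm_num
  | succ k ih =>
    intro x y
    rw [kstep_succ_def]
    exact tsum_nonneg fun z => mul_nonneg (hp x z) (ih z y)

lemma kstep_one (x y : X) : kstep p 1 x y = p x y := by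
  rw [kstep_succ_def, tsum_eq_single y]
  · rw [kstep_zero, if_pos rfl, mul_one]
  · intro z hz
    rw [kstep_zero, if_neg hz, mul_zero]

lemma kstep_hasSum (hp0 : ∀ x y, 0 ≤ p x y) (hp1 : ∀ x, HasSum (p x) 1) :
    ∀ (l : ℕ) (x : X), HasSum (kstep p l x) 1 := by
  intro l
  induction l with
  | zero =>
    intro x
    have h := hasSum_ite_eq x (1 : ℝ)
    convert h using 2 with y
    rw [kstep_zero]
    by_cases h : x = y
    · subst h; simp
    · rw [if_neg h, if_neg (fun h' => h h'.symm)]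
  | succ k ih =>
    intro x
    have hF0 : ∀ z y, (0:ℝ) ≤ p x z * kstep p k z y :=
      fun z y => mul_nonneg (hp0 _ _) (kstep_nonneg p hp0 _ _ _)
    have hrow : ∀ z, Summable fun y => p x z * kstep p k z y :=
      fun z => ((ih z).summable).mul_left _
    have hrowsum : ∀ z, (∑' y, p x z * kstep p k z y) = p x z := by
      intro z
      rw [tsum_mul_left, (ih z).tsum_eq, mul_one]
    have hcol : Summable fun z => ∑' y, p x z * kstep p k z y := by
      simp only [hrowsum]; exact (hp1 x).summable
    have hunc : Summable (Function.uncurry fun z y => p x z * kstep p k z y) :=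
      (summable_prod_of_nonneg fun q => hF0 q.1 q.2).mpr ⟨hrow, hcol⟩
    have hcol' : ∀ y, Summable fun z => p x z * kstep p k z y :=
      fun y => hunc.prod_symm.prod_factor y
    have hswap : Summable fun y => ∑' z, p x z * kstep p k z y :=
      ((summable_prod_of_nonneg fun q => hF0 q.2 q.1).mp hunc.prod_symm).2
    have hsummable : Summable (kstep p (k + 1) x) := by
      have : kstep p (k + 1) x = fun y => ∑' z, p x z * kstep p k z y := by
        funext y; exact kstep_succ_def p k x y
      rw [this]; exact hswap
    have htsum : (∑' y, kstep p (k + 1) x y) = 1 := by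
      calc (∑' y, kstep p (k + 1) x y)
          = ∑' y, ∑' z, p x z * kstep p k z y :=
            tsum_congr fun y => kstep_succ_def p k x y
        _ = ∑' z, ∑' y, p x z * kstep p k z y := Summable.tsum_comm' hunc hrow hcol'
        _ = ∑' z, p x z := tsum_congr hrowsum
        _ = 1 := (hp1 x).tsum_eq
    exact htsum ▸ hsummable.hasSum

lemma kstep_le_one (hp0 : ∀ x y, 0 ≤ p x y) (hp1 : ∀ x, HasSum (p x) 1)
    (l : ℕ) (x y : X) : kstep p l x y ≤ 1 :=
  le_hasSum (kstep_hasSum p hp0 hp1 l x) y fun z _ => kstep_nonneg p hp0 l x z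

lemma p_le_one (hp0 : ∀ x y, 0 ≤ p x y) (hp1 : ∀ x, HasSum (p x) 1)
    (x y : X) : p x y ≤ 1 := by
  rw [← kstep_one p x y]; exact kstep_le_one p hp0 hp1 1 x y

/-- Chapman–Kolmogorov the other way round: `p^{l+1} = p^l ∘ p`. -/
lemma kstep_succ' (hp0 : ∀ x y, 0 ≤ p x y) (hp1 : ∀ x, HasSum (p x) 1) :
    ∀ (l : ℕ) (x y : X), kstep p (l + 1) x y = ∑' z, kstep p l x z * p z y := by
  intro l
  induction l with
  | zero =>
    intro x y
    rw [kstep_one, tsum_eq_single x]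
    · rw [kstep_zero, if_pos rfl, one_mul]
    · intro z hz
      rw [kstep_zero, if_neg (fun h => hz h.symm), zero_mul]
  | succ k ih =>
    intro x y
    have hg0 : ∀ z w, (0:ℝ) ≤ p x z * (kstep p k z w * p w y) := fun z w =>
      mul_nonneg (hp0 _ _) (mul_nonneg (kstep_nonneg p hp0 _ _ _) (hp0 _ _))
    have hrow0 : ∀ z, Summable fun w => kstep p k z w * p w y := by
      intro z
      refine Summable.of_nonneg_of_le
        (fun w => mul_nonneg (kstep_nonneg p hp0 _ _ _) (hp0 _ _))
        (fun w => ?_) ((kstep_hasSum p hp0 hp1 k z).summable)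
      calc kstep p k z w * p w y ≤ kstep p k z w * 1 :=
            mul_le_mul_of_nonneg_left (p_le_one p hp0 hp1 w y)
              (kstep_nonneg p hp0 _ _ _)
        _ = kstep p k z w := mul_one _
    have hrow : ∀ z, Summable fun w => p x z * (kstep p k z w * p w y) :=
      fun z => (hrow0 z).mul_left _
    have hrowsum_le : ∀ z, (∑' w, p x z * (kstep p k z w * p w y)) ≤ p x z := by
      intro z
      rw [tsum_mul_left]
      have h1 : (∑' w, kstep p k z w * p w y) ≤ 1 := by
        have hle := Summable.tsum_le_tsum (f := fun w => kstep p k z w * p w y)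
          (g := fun w => kstep p k z w)
          (fun w => by
            calc kstep p k z w * p w y ≤ kstep p k z w * 1 :=
                  mul_le_mul_of_nonneg_left (p_le_one p hp0 hp1 w y)
                    (kstep_nonneg p hp0 _ _ _)
              _ = kstep p k z w := mul_one _)
          (hrow0 z) ((kstep_hasSum p hp0 hp1 k z).summable)
        calc (∑' w, kstep p k z w * p w y) ≤ ∑' w, kstep p k z w := hle
          _ = 1 := (kstep_hasSum p hp0 hp1 k z).tsum_eq
      calc p x z * (∑' w, kstep p k z w * p w y) ≤ p x z * 1 :=
            mul_le_mul_of_nonneg_left h1 (hp0 _ _)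
        _ = p x z := mul_one _
    have hcol : Summable fun z => ∑' w, p x z * (kstep p k z w * p w y) :=
      Summable.of_nonneg_of_le (fun z => tsum_nonneg fun w => hg0 z w)
        hrowsum_le (hp1 x).summable
    have hunc : Summable (Function.uncurry fun z w => p x z * (kstep p k z w * p w y)) :=
      (summable_prod_of_nonneg fun q => hg0 q.1 q.2).mpr ⟨hrow, hcol⟩
    have hcol' : ∀ w, Summable fun z => p x z * (kstep p k z w * p w y) :=
      fun w => hunc.prod_symm.prod_factor w
    calc kstep p (k + 1 + 1) x y
        = ∑' z, p x z * kstep p (k + 1) z y := kstep_succ_def p (k + 1) x y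
      _ = ∑' z, p x z * ∑' w, kstep p k z w * p w y := by
          exact tsum_congr fun z => by rw [ih]
      _ = ∑' z, ∑' w, p x z * (kstep p k z w * p w y) := by
          exact tsum_congr fun z => (tsum_mul_left).symm
      _ = ∑' w, ∑' z, p x z * (kstep p k z w * p w y) := (Summable.tsum_comm' hunc hrow hcol').symm
      _ = ∑' w, (∑' z, p x z * kstep p k z w) * p w y := by
          refine tsum_congr fun w => ?_
          rw [← tsum_mul_right]
          exact tsum_congr fun z => by ring
      _ = ∑' w, kstep p (k + 1) x w * p w y :=
          tsum_congr fun w => by rw [kstep_succ_def]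

/-- Expectation recursion: `E_{l+1} = E_l + ∑ p^l(x,·) Δ¹V`. -/
lemma exp_succ (hp0 : ∀ x y, 0 ≤ p x y) (hp1 : ∀ x, HasSum (p x) 1)
    (V : X → ℝ) (hV_nonneg : ∀ x, 0 ≤ V x)
    (hV_summable : ∀ (l : ℕ) (x : X), Summable (fun y => kstep p l x y * V y))
    (h_abs : ∀ (l : ℕ) (x : X), Summable (fun y => kstep p l x y * |drift p 1 V y|))
    (l : ℕ) (x : X) :
    (∑' y, kstep p (l + 1) x y * V y)
      = (∑' z, kstep p l x z * drift p 1 V z) + ∑' z, kstep p l x z * V z := by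
  have honestep : ∀ z, (∑' y, p z y * V y) = drift p 1 V z + V z := by
    intro z
    have h : (∑' y, kstep p 1 z y * V y) = ∑' y, p z y * V y :=
      tsum_congr fun y => by rw [kstep_one]
    rw [drift] at *
    rw [← h]; ring
  have hone_summable : ∀ z, Summable fun y => p z y * V y := by
    intro z
    have h := hV_summable 1 z
    convert h using 2 with y
    rw [kstep_one]
  have hh0 : ∀ z y, (0:ℝ) ≤ kstep p l x z * (p z y * V y) := fun z y =>
    mul_nonneg (kstep_nonneg p hp0 _ _ _) (mul_nonneg (hp0 _ _) (hV_nonneg _))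
  have hrow : ∀ z, Summable fun y => kstep p l x z * (p z y * V y) :=
    fun z => (hone_summable z).mul_left _
  have hrowsum : ∀ z, (∑' y, kstep p l x z * (p z y * V y))
      = kstep p l x z * (drift p 1 V z + V z) := by
    intro z
    rw [tsum_mul_left, honestep z]
  have hdsum : Summable fun z => kstep p l x z * drift p 1 V z := by
    apply Summable.of_abs
    have h : (fun z => |kstep p l x z * drift p 1 V z|)
        = fun z => kstep p l x z * |drift p 1 V z| := by
      funext z
      rw [abs_mul, abs_of_nonneg (kstep_nonneg p hp0 _ _ _)]
    rw [h]
    exact h_abs l x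
  have hcol : Summable fun z => ∑' y, kstep p l x z * (p z y * V y) := by
    simp only [hrowsum, mul_add]
    exact hdsum.add (hV_summable l x)
  have hunc : Summable (Function.uncurry fun z y => kstep p l x z * (p z y * V y)) :=
    (summable_prod_of_nonneg fun q => hh0 q.1 q.2).mpr ⟨hrow, hcol⟩
  have hcol' : ∀ y, Summable fun z => kstep p l x z * (p z y * V y) :=
    fun y => hunc.prod_symm.prod_factor y
  calc (∑' y, kstep p (l + 1) x y * V y)
      = ∑' y, (∑' z, kstep p l x z * p z y) * V y :=
        tsum_congr fun y => by rw [kstep_succ' p hp0 hp1]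
    _ = ∑' y, ∑' z, kstep p l x z * (p z y * V y) := by
        refine tsum_congr fun y => ?_
        rw [← tsum_mul_right]
        exact tsum_congr fun z => by ring
    _ = ∑' z, ∑' y, kstep p l x z * (p z y * V y) := Summable.tsum_comm' hunc hrow hcol'
    _ = ∑' z, kstep p l x z * (drift p 1 V z + V z) := tsum_congr hrowsum
    _ = (∑' z, kstep p l x z * drift p 1 V z) + ∑' z, kstep p l x z * V z := by
        simp only [mul_add]
        exact Summable.tsum_add hdsum (hV_summable l x)

end Aux

/-- If the one-step drift of `V` is at most `η` everywhere and at most `-ε`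
outside `B`, and if the chain started at `x` cannot be in `B` during the
first `k - 1` steps, then the `k`-step drift at `x` is at most `-k ε`. -/
theorem drift_le_of_avoids
    {X : Type*} [Countable X]
    (p : X → X → ℝ)
    (hp_nonneg : ∀ x y, 0 ≤ p x y)
    (hp_sum : ∀ x, HasSum (p x) 1)
    (B : Set X)
    (V : X → ℝ)
    (hV_nonneg : ∀ x, 0 ≤ V x)
    (hV_summable : ∀ (l : ℕ) (x : X), Summable (fun y => kstep p l x y * V y))
    (h_abs : ∀ (l : ℕ) (x : X), Summable (fun y => kstep p l x y * |drift p 1 V y|))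
    (ε η : ℝ) (hε : 0 < ε) (hη : 0 ≤ η)
    (h_drift_up : ∀ y, drift p 1 V y ≤ η)
    (h_drift_down : ∀ y ∉ B, drift p 1 V y ≤ -ε)
    (k : ℕ) (hk : 1 ≤ k) (x : X)
    (h_avoid : ∀ y ∈ B, ∀ l, l ≤ k - 1 → kstep p l x y = 0) :
    drift p k V x ≤ -(k : ℝ) * ε := by
  have hdsum : ∀ l, Summable fun z => kstep p l x z * drift p 1 V z := by
    intro l
    apply Summable.of_abs
    have h : (fun z => |kstep p l x z * drift p 1 V z|)
        = fun z => kstep p l x z * |drift p 1 V z| := by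
      funext z
      rw [abs_mul, abs_of_nonneg (kstep_nonneg p hp_nonneg _ _ _)]
    rw [h]
    exact h_abs l x
  have hD : ∀ l, l ≤ k - 1 → (∑' z, kstep p l x z * drift p 1 V z) ≤ -ε := by
    intro l hl
    have hle : ∀ z, kstep p l x z * drift p 1 V z ≤ kstep p l x z * (-ε) := by
      intro z
      by_cases hz : z ∈ B
      · rw [h_avoid z hz l hl]; simp
      · exact mul_le_mul_of_nonneg_left (h_drift_down z hz)
          (kstep_nonneg p hp_nonneg _ _ _)
    calc (∑' z, kstep p l x z * drift p 1 V z)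
        ≤ ∑' z, kstep p l x z * (-ε) :=
          Summable.tsum_le_tsum hle (hdsum l)
            (((kstep_hasSum p hp_nonneg hp_sum l x).summable).mul_right _)
      _ = (∑' z, kstep p l x z) * (-ε) := tsum_mul_right
      _ = -ε := by rw [(kstep_hasSum p hp_nonneg hp_sum l x).tsum_eq, one_mul]
  have hE : ∀ l, l ≤ k → (∑' y, kstep p l x y * V y) ≤ V x - (l : ℝ) * ε := by
    intro l
    induction l with
    | zero =>
      intro _
      have h : (∑' y, kstep p 0 x y * V y) = V x := by
        rw [tsum_eq_single x]
        · rw [kstep_zero, if_pos rfl, one_mul]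
        · intro z hz
          rw [kstep_zero, if_neg (fun h => hz h.symm), zero_mul]
      rw [h]; simp
    | succ l ih =>
      intro hlk
      have hl : l ≤ k - 1 := by omega
      have hlk' : l ≤ k := by omega
      rw [exp_succ p hp_nonneg hp_sum V hV_nonneg hV_summable h_abs l x]
      have hadd := add_le_add (hD l hl) (ih hlk')
      calc (∑' z, kstep p l x z * drift p 1 V z) + ∑' z, kstep p l x z * V z
          ≤ -ε + (V x - (l : ℝ) * ε) := hadd
        _ = V x - ((l : ℕ) + 1 : ℝ) * ε := by ring
        _ = V x - ((l + 1 : ℕ) : ℝ) * ε := by push_cast; ring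
  have hfin := hE k le_rfl
  rw [drift]
  linarith
end

section
/- Let X be a countable set and p a stochastic matrix on X whose associated Markov chain is irreducible and aperiodic, with k-step transition probabilities p^k. Suppose there exist a finite set A_0 ⊆ X, a state x ∈ X, and an integer K ≥ 1 such that liminf_{n→∞} (1/n) ∑_{l=0}^{n−1} p^{lK}(x, A_0) > 0, where p^{lK}(x, A_0) = ∑_{y ∈ A_0} p^{lK}(x,y). Then the chain is positive recurrent; in particular there exists a probability distribution π on X with π(y) = ∑_x π(x) p(x,y) for all y. -/
open scoped BigOperators Classical

/-- ENNReal version of the kernel iterates. -/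
noncomputable def eq_kernel {X : Type*} (p : X → X → ℝ) : ℕ → X → X → ENNReal
  | 0 => fun x y => if x = y then 1 else 0
  | (k + 1) => fun x y => ∑' z, ENNReal.ofReal (p x z) * eq_kernel p k z y

namespace eqk

variable {X : Type*} (p : X → X → ℝ)

lemma succ (k : ℕ) (x y : X) :
    eq_kernel p (k+1) x y = ∑' z, ENNReal.ofReal (p x z) * eq_kernel p k z y := rfl

lemma zero (x y : X) : eq_kernel p 0 x y = if x = y then 1 else 0 := rfl

variable (hp_nonneg : ∀ x y, 0 ≤ p x y) (hp_sum : ∀ x, HasSum (p x) 1)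

include hp_nonneg hp_sum in
lemma ofReal_sum (x : X) : ∑' y, ENNReal.ofReal (p x y) = 1 := by
  rw [← ENNReal.ofReal_tsum_of_nonneg (hp_nonneg x) (hp_sum x).summable,
    (hp_sum x).tsum_eq, ENNReal.ofReal_one]

include hp_nonneg hp_sum in
lemma sum_one : ∀ (k : ℕ) (x : X), ∑' y, eq_kernel p k x y = 1 := by
  intro k
  induction k with
  | zero =>
    intro x
    rw [show (fun y => eq_kernel p 0 x y) = fun y => if x = y then 1 else 0 from rfl]
    rw [tsum_eq_single x (fun b hb => by simp [Ne.symm hb])]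
    simp
  | succ k ih =>
    intro x
    simp only [succ]
    rw [ENNReal.tsum_comm]
    calc ∑' z, ∑' y, ENNReal.ofReal (p x z) * eq_kernel p k z y
        = ∑' z, ENNReal.ofReal (p x z) * ∑' y, eq_kernel p k z y := by
          congr 1; funext z; exact ENNReal.tsum_mul_left
      _ = ∑' z, ENNReal.ofReal (p x z) := by simp [ih]
      _ = 1 := ofReal_sum p hp_nonneg hp_sum x

include hp_nonneg hp_sum in
lemma le_one (k : ℕ) (x y : X) : eq_kernel p k x y ≤ 1 :=
  (ENNReal.le_tsum y).trans (sum_one p hp_nonneg hp_sum k x).le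

include hp_nonneg hp_sum in
lemma ne_top (k : ℕ) (x y : X) : eq_kernel p k x y ≠ ⊤ :=
  ne_top_of_le_ne_top ENNReal.one_ne_top (le_one p hp_nonneg hp_sum k x y)

/-- Chapman–Kolmogorov. -/
lemma CK : ∀ (m n : ℕ) (x y : X),
    eq_kernel p (m + n) x y = ∑' z, eq_kernel p m x z * eq_kernel p n z y := by
  intro m
  induction m with
  | zero =>
    intro n x y
    rw [zero_add]
    rw [tsum_eq_single x (fun b hb => by simp [zero, Ne.symm hb])]
    simp [zero]
  | succ m ih =>
    intro n x y
    have h1 : m + 1 + n = (m + n) + 1 := by omega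
    rw [h1, succ]
    calc ∑' z, ENNReal.ofReal (p x z) * eq_kernel p (m + n) z y
        = ∑' z, ENNReal.ofReal (p x z) * ∑' w, eq_kernel p m z w * eq_kernel p n w y := by
          congr 1; funext z; rw [ih]
      _ = ∑' z, ∑' w, ENNReal.ofReal (p x z) * eq_kernel p m z w * eq_kernel p n w y := by
          congr 1; funext z; rw [← ENNReal.tsum_mul_left]; congr 1; funext w; ring
      _ = ∑' w, ∑' z, ENNReal.ofReal (p x z) * eq_kernel p m z w * eq_kernel p n w y :=
          ENNReal.tsum_comm
      _ = ∑' w, (∑' z, ENNReal.ofReal (p x z) * eq_kernel p m z w) * eq_kernel p n w y := by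
          congr 1; funext w; exact ENNReal.tsum_mul_right
      _ = ∑' w, eq_kernel p (m+1) x w * eq_kernel p n w y := by
          congr 1

lemma one (x y : X) : eq_kernel p 1 x y = ENNReal.ofReal (p x y) := by
  rw [succ]
  rw [tsum_eq_single y (fun b hb => by simp [zero, hb])]
  simp [zero]

include hp_nonneg hp_sum in
lemma kstep_eq : ∀ (k : ℕ) (x y : X), kstep p k x y = (eq_kernel p k x y).toReal := by
  intro k
  induction k with
  | zero => intro x y; by_cases h : x = y <;> simp [kstep, zero, h]
  | succ k ih =>
    intro x y
    show (∑' z, p x z * kstep p k z y) = _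
    have : ∀ z, p x z * kstep p k z y
        = (ENNReal.ofReal (p x z) * eq_kernel p k z y).toReal := by
      intro z
      rw [ENNReal.toReal_mul, ih, ENNReal.toReal_ofReal (hp_nonneg x z)]
    simp only [this]
    rw [← ENNReal.tsum_toReal_eq
      (fun z => ENNReal.mul_ne_top ENNReal.ofReal_ne_top (ne_top p hp_nonneg hp_sum k z y))]
    rfl

include hp_nonneg hp_sum in
lemma kstep_nonneg (k : ℕ) (x y : X) : 0 ≤ kstep p k x y := by
  rw [kstep_eq p hp_nonneg hp_sum]; exact ENNReal.toReal_nonneg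

end eqk

/-- If an irreducible aperiodic countable Markov chain visits some finite set
`A₀` along a `K`-skeleton with positive Cesàro frequency from some state, then
it is positive recurrent: a stationary probability distribution exists. -/
theorem positive_recurrent_of_liminf_pos
    {X : Type*} [Countable X]
    (p : X → X → ℝ)
    (hp_nonneg : ∀ x y, 0 ≤ p x y)
    (hp_sum : ∀ x, HasSum (p x) 1)
    (h_irred : ∀ x y, ∃ n, 0 < kstep p n x y)
    (h_aper : ∀ x, ∀ d : ℕ, (∀ n, 1 ≤ n → 0 < kstep p n x x → d ∣ n) → d = 1)
    (A₀ : Finset X) (x : X) (K : ℕ) (hK : 1 ≤ K)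
    (h_liminf : 0 < Filter.liminf
      (fun n : ℕ => (1 / (n : ℝ)) * ∑ l ∈ Finset.range n, ∑ y ∈ A₀, kstep p (l * K) x y)
      Filter.atTop) :
    ∃ π : X → ℝ, (∀ x, 0 ≤ π x) ∧ HasSum π 1 ∧
      ∀ y, HasSum (fun x => π x * p x y) (π y) := by
  classical
  have hsum1 : ∀ (k : ℕ) (a : X), ∑' y, eq_kernel p k a y = 1 := eqk.sum_one p hp_nonneg hp_sum
  have hle1 : ∀ (k : ℕ) (a b : X), eq_kernel p k a b ≤ 1 := eqk.le_one p hp_nonneg hp_sum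
  have hnt : ∀ (k : ℕ) (a b : X), eq_kernel p k a b ≠ ⊤ := eqk.ne_top p hp_nonneg hp_sum
  have hkeq : ∀ (k : ℕ) (a b : X), kstep p k a b = (eq_kernel p k a b).toReal :=
    eqk.kstep_eq p hp_nonneg hp_sum
  -- Cesàro averages along the K-skeleton, as ENNReal measures
  set ν : ℕ → X → ENNReal :=
    fun n y => (n : ENNReal)⁻¹ * ∑ l ∈ Finset.range n, eq_kernel p (l * K) x y with hνdef
  have hν_le_one : ∀ n y, ν n y ≤ 1 := by
    intro n y
    calc ν n y ≤ (n : ENNReal)⁻¹ * ∑ l ∈ Finset.range n, 1 :=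
          mul_le_mul_right (Finset.sum_le_sum fun l _ => hle1 _ _ _) _
      _ = (n : ENNReal)⁻¹ * n := by simp
      _ ≤ 1 := ENNReal.inv_mul_le_one _
  have hν_nt : ∀ n y, ν n y ≠ ⊤ :=
    fun n y => ne_top_of_le_ne_top ENNReal.one_ne_top (hν_le_one n y)
  have hν_mass : ∀ n, ∑' y, ν n y ≤ 1 := by
    intro n
    have : ∑' y, ν n y = (n : ENNReal)⁻¹ * ∑ l ∈ Finset.range n, ∑' y, eq_kernel p (l * K) x y := by
      rw [hνdef, ENNReal.tsum_mul_left, Summable.tsum_finsetSum fun _ _ => ENNReal.summable]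
    rw [this]
    simp only [hsum1]
    calc (n : ENNReal)⁻¹ * ∑ l ∈ Finset.range n, 1 = (n : ENNReal)⁻¹ * n := by simp
      _ ≤ 1 := ENNReal.inv_mul_le_one _
  -- ultrafilter limit
  obtain ⟨U, hU⟩ : ∃ U : Ultrafilter ℕ, ↑U ≤ (Filter.atTop : Filter ℕ) :=
    ⟨Ultrafilter.of Filter.atTop, Ultrafilter.of_le _⟩
  haveI : (↑U : Filter ℕ).NeBot := U.neBot
  have hlim : ∀ f : ℕ → ENNReal, Filter.Tendsto f ↑U (nhds (U.map f).lim) := by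
    intro f
    have h := Ultrafilter.le_nhds_lim (U.map f)
    rw [Ultrafilter.coe_map] at h
    exact h
  set μ : X → ENNReal := fun y => (U.map fun n => ν n y).lim with hμdef
  have hμt : ∀ y, Filter.Tendsto (fun n => ν n y) ↑U (nhds (μ y)) := fun y => hlim _
  have hμ1 : ∀ y, μ y ≤ 1 := fun y =>
    le_of_tendsto (hμt y) (Filter.Eventually.of_forall fun n => hν_le_one n y)
  have hμnt : ∀ y, μ y ≠ ⊤ := fun y => ne_top_of_le_ne_top ENNReal.one_ne_top (hμ1 y)
  have hFsum : ∀ F : Finset X,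
      Filter.Tendsto (fun n => ∑ y ∈ F, ν n y) ↑U (nhds (∑ y ∈ F, μ y)) :=
    fun F => tendsto_finset_sum F fun y _ => hμt y
  have hμmass : ∑' y, μ y ≤ 1 := by
    rw [ENNReal.tsum_eq_iSup_sum]
    exact iSup_le fun F => le_of_tendsto (hFsum F)
      (Filter.Eventually.of_forall fun n => (ENNReal.sum_le_tsum F).trans (hν_mass n))
  -- positivity of the mass on A₀
  have hA₀nt : ∀ n, (∑ y ∈ A₀, ν n y) ≠ ⊤ := by
    intro n
    exact (ENNReal.sum_lt_top.2 fun y _ => (hν_nt n y).lt_top).ne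
  have hr_eq : ∀ n : ℕ,
      (1 / (n : ℝ)) * ∑ l ∈ Finset.range n, ∑ y ∈ A₀, kstep p (l * K) x y
        = (∑ y ∈ A₀, ν n y).toReal := by
    intro n
    have h1 : ∑ y ∈ A₀, ν n y
        = (n : ENNReal)⁻¹ * ∑ l ∈ Finset.range n, ∑ y ∈ A₀, eq_kernel p (l * K) x y := by
      rw [hνdef, ← Finset.mul_sum, Finset.sum_comm]
    rw [h1, ENNReal.toReal_mul, ENNReal.toReal_inv]
    simp only [ENNReal.toReal_natCast]
    congr 1
    · rw [one_div]
    · rw [ENNReal.toReal_sum fun l _ => (ENNReal.sum_lt_top.2 fun y _ => (hnt _ _ _).lt_top).ne]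
      refine Finset.sum_congr rfl fun l _ => ?_
      rw [ENNReal.toReal_sum fun y _ => hnt _ _ _]
      exact Finset.sum_congr rfl fun y _ => hkeq _ _ _
  set L := ∑ y ∈ A₀, μ y with hL
  have hLpos : 0 < L := by
    have hbdd : Filter.IsBoundedUnder (· ≥ ·) Filter.atTop
        (fun n : ℕ => (1 / (n : ℝ)) * ∑ l ∈ Finset.range n, ∑ y ∈ A₀, kstep p (l * K) x y) := by
      refine Filter.isBoundedUnder_of ⟨0, fun n => ?_⟩
      exact mul_nonneg (by positivity) (Finset.sum_nonneg fun l _ =>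
        Finset.sum_nonneg fun y _ => eqk.kstep_nonneg p hp_nonneg hp_sum _ _ _)
    have hhalf := half_lt_self h_liminf
    have hev : ∀ᶠ n : ℕ in Filter.atTop,
        (Filter.liminf
          (fun n : ℕ => (1 / (n : ℝ)) * ∑ l ∈ Finset.range n, ∑ y ∈ A₀, kstep p (l * K) x y)
          Filter.atTop) / 2
          < (1 / (n : ℝ)) * ∑ l ∈ Finset.range n, ∑ y ∈ A₀, kstep p (l * K) x y :=
      Filter.eventually_lt_of_lt_liminf hhalf hbdd
    set ε := Filter.liminf
      (fun n : ℕ => (1 / (n : ℝ)) * ∑ l ∈ Finset.range n, ∑ y ∈ A₀, kstep p (l * K) x y)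
      Filter.atTop with hε
    have hev' : ∀ᶠ n in ↑U, ENNReal.ofReal (ε / 2) ≤ ∑ y ∈ A₀, ν n y := by
      refine (Filter.Eventually.filter_mono hU hev).mono fun n hn => ?_
      have h2 := hr_eq n
      calc ENNReal.ofReal (ε / 2) ≤ ENNReal.ofReal ((∑ y ∈ A₀, ν n y).toReal) :=
            ENNReal.ofReal_le_ofReal (by rw [← h2]; exact hn.le)
        _ = ∑ y ∈ A₀, ν n y := ENNReal.ofReal_toReal (hA₀nt n)
    have := ge_of_tendsto (hFsum A₀) hev'
    exact lt_of_lt_of_le (ENNReal.ofReal_pos.2 (by linarith)) this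
  -- superinvariance of μ under the K-step kernel
  have hkey : ∀ n y, ∑' z, ν n z * eq_kernel p K z y ≤ ν n y + (n : ENNReal)⁻¹ := by
    intro n y
    have h1 : ∑' z, ν n z * eq_kernel p K z y
        = (n : ENNReal)⁻¹ * ∑ l ∈ Finset.range n, eq_kernel p (l * K + K) x y := by
      calc ∑' z, ν n z * eq_kernel p K z y
          = ∑' z, (n : ENNReal)⁻¹ *
              ∑ l ∈ Finset.range n, eq_kernel p (l * K) x z * eq_kernel p K z y := by
            refine tsum_congr fun z => ?_
            rw [hνdef, mul_assoc, Finset.sum_mul]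
        _ = (n : ENNReal)⁻¹ * ∑ l ∈ Finset.range n,
              ∑' z, eq_kernel p (l * K) x z * eq_kernel p K z y := by
            rw [ENNReal.tsum_mul_left, Summable.tsum_finsetSum fun _ _ => ENNReal.summable]
        _ = (n : ENNReal)⁻¹ * ∑ l ∈ Finset.range n, eq_kernel p (l * K + K) x y := by
            congr 1
            exact Finset.sum_congr rfl fun l _ => (eqk.CK p (l * K) K x y).symm
    rw [h1]
    have h2 : ∑ l ∈ Finset.range n, eq_kernel p (l * K + K) x y
        ≤ (∑ l ∈ Finset.range n, eq_kernel p (l * K) x y) + 1 := by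
      have h3 : ∑ l ∈ Finset.range n, eq_kernel p (l * K + K) x y
          = ∑ l ∈ Finset.range n, eq_kernel p ((l + 1) * K) x y := by
        refine Finset.sum_congr rfl fun l _ => ?_
        congr 1
        ring
      rw [h3]
      calc ∑ l ∈ Finset.range n, eq_kernel p ((l + 1) * K) x y
          ≤ ∑ l ∈ Finset.range (n + 1), eq_kernel p (l * K) x y := by
            rw [Finset.sum_range_succ' (fun l => eq_kernel p (l * K) x y) n]
            exact le_self_add
        _ = (∑ l ∈ Finset.range n, eq_kernel p (l * K) x y) + eq_kernel p (n * K) x y :=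
            Finset.sum_range_succ _ n
        _ ≤ (∑ l ∈ Finset.range n, eq_kernel p (l * K) x y) + 1 :=
            add_le_add_right (hle1 _ _ _) _
    calc (n : ENNReal)⁻¹ * ∑ l ∈ Finset.range n, eq_kernel p (l * K + K) x y
        ≤ (n : ENNReal)⁻¹ * ((∑ l ∈ Finset.range n, eq_kernel p (l * K) x y) + 1) :=
          mul_le_mul_right h2 _
      _ = ν n y + (n : ENNReal)⁻¹ := by rw [mul_add, mul_one]
  have hsuper : ∀ y, ∑' z, μ z * eq_kernel p K z y ≤ μ y := by
    intro y
    rw [ENNReal.tsum_eq_iSup_sum]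
    refine iSup_le fun F => ?_
    have ht1 : Filter.Tendsto (fun n => ∑ z ∈ F, ν n z * eq_kernel p K z y) ↑U
        (nhds (∑ z ∈ F, μ z * eq_kernel p K z y)) :=
      tendsto_finset_sum F fun z _ => ENNReal.Tendsto.mul_const (hμt z) (Or.inr (hnt K z y))
    have ht2 : Filter.Tendsto (fun n : ℕ => ν n y + (n : ENNReal)⁻¹) ↑U (nhds (μ y + 0)) :=
      (hμt y).add (ENNReal.tendsto_inv_nat_nhds_zero.mono_left hU)
    have h := le_of_tendsto_of_tendsto ht1 ht2
      (Filter.Eventually.of_forall fun n => (ENNReal.sum_le_tsum F).trans (hkey n y))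
    simpa using h
  -- equality of mass forces exact invariance under the K-step kernel
  set M := ∑' z, μ z with hM
  have hMle1 : M ≤ 1 := hμmass
  have hMnt : M ≠ ⊤ := ne_top_of_le_ne_top ENNReal.one_ne_top hMle1
  have hMpos : 0 < M := lt_of_lt_of_le hLpos (ENNReal.sum_le_tsum A₀)
  have hPmass : ∑' y, ∑' z, μ z * eq_kernel p K z y = M := by
    rw [ENNReal.tsum_comm]
    calc ∑' z, ∑' y, μ z * eq_kernel p K z y
        = ∑' z, μ z * ∑' y, eq_kernel p K z y := tsum_congr fun z => ENNReal.tsum_mul_left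
      _ = M := by simp [hsum1, hM]
  have heq : ∀ y, ∑' z, μ z * eq_kernel p K z y = μ y := by
    by_contra h
    push_neg at h
    obtain ⟨y0, hy0⟩ := h
    have hlt : ∑' y, (∑' z, μ z * eq_kernel p K z y) < ∑' y, μ y :=
      ENNReal.tsum_lt_tsum (hPmass ▸ hMnt) hsuper (lt_of_le_of_ne (hsuper y0) hy0)
    rw [hPmass, ← hM] at hlt
    exact lt_irrefl M hlt
  -- iterates of μ
  set g : ℕ → X → ENNReal := fun j y => ∑' z, μ z * eq_kernel p j z y with hg
  have hg0 : ∀ y, g 0 y = μ y := by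
    intro y
    rw [hg]
    simp only
    rw [tsum_eq_single y (fun b hb => by simp [eqk.zero, hb])]
    simp [eqk.zero]
  have hgK : ∀ y, g K y = μ y := heq
  have hgle : ∀ j y, g j y ≤ M := by
    intro j y
    calc ∑' z, μ z * eq_kernel p j z y ≤ ∑' z, μ z * 1 :=
          ENNReal.tsum_le_tsum fun z => mul_le_mul_right (hle1 j z y) _
      _ = M := by simp [hM]
  have hgnt : ∀ j y, g j y ≠ ⊤ := fun j y => ne_top_of_le_ne_top hMnt (hgle j y)
  have hgmass : ∀ j, ∑' y, g j y = M := by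
    intro j
    rw [ENNReal.tsum_comm]
    calc ∑' z, ∑' y, μ z * eq_kernel p j z y
        = ∑' z, μ z * ∑' y, eq_kernel p j z y := tsum_congr fun z => ENNReal.tsum_mul_left
      _ = M := by simp [hsum1, hM]
  have hgstep : ∀ j y, ∑' z, g j z * ENNReal.ofReal (p z y) = g (j + 1) y := by
    intro j y
    calc ∑' z, (∑' w, μ w * eq_kernel p j w z) * ENNReal.ofReal (p z y)
        = ∑' z, ∑' w, μ w * eq_kernel p j w z * ENNReal.ofReal (p z y) :=
          tsum_congr fun z => ENNReal.tsum_mul_right.symm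
      _ = ∑' w, ∑' z, μ w * eq_kernel p j w z * ENNReal.ofReal (p z y) := ENNReal.tsum_comm
      _ = ∑' w, μ w * ∑' z, eq_kernel p j w z * ENNReal.ofReal (p z y) := by
          refine tsum_congr fun w => ?_
          rw [← ENNReal.tsum_mul_left]
          exact tsum_congr fun z => by ring
      _ = ∑' w, μ w * eq_kernel p (j + 1) w y := by
          refine tsum_congr fun w => ?_
          congr 1
          rw [show (∑' z, eq_kernel p j w z * ENNReal.ofReal (p z y))
              = ∑' z, eq_kernel p j w z * eq_kernel p 1 z y from
                tsum_congr fun z => by rw [eqk.one],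
            ← eqk.CK p j 1 w y]
  -- the stationary (unnormalized) measure
  set σ : X → ENNReal := fun y => ∑ j ∈ Finset.range K, g j y with hσ
  have hσnt : ∀ y, σ y ≠ ⊤ := by
    intro y
    exact (ENNReal.sum_lt_top.2 fun j _ => (hgnt j y).lt_top).ne
  have hσstep : ∀ y, ∑' z, σ z * ENNReal.ofReal (p z y) = σ y := by
    intro y
    have h1 : ∑' z, σ z * ENNReal.ofReal (p z y) = ∑ j ∈ Finset.range K, g (j + 1) y := by
      calc ∑' z, (∑ j ∈ Finset.range K, g j z) * ENNReal.ofReal (p z y)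
          = ∑' z, ∑ j ∈ Finset.range K, g j z * ENNReal.ofReal (p z y) :=
            tsum_congr fun z => Finset.sum_mul _ _ _
        _ = ∑ j ∈ Finset.range K, ∑' z, g j z * ENNReal.ofReal (p z y) :=
            Summable.tsum_finsetSum fun _ _ => ENNReal.summable
        _ = ∑ j ∈ Finset.range K, g (j + 1) y :=
            Finset.sum_congr rfl fun j _ => hgstep j y
    rw [h1]
    have h2 : (∑ j ∈ Finset.range K, g (j + 1) y) + g 0 y
        = σ y + g K y := by
      rw [← Finset.sum_range_succ' (fun j => g j y) K, Finset.sum_range_succ]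
    rw [hg0, hgK] at h2
    exact WithTop.add_right_cancel (hμnt y) h2
  have hσmass : ∑' y, σ y = (K : ENNReal) * M := by
    rw [Summable.tsum_finsetSum fun _ _ => ENNReal.summable]
    simp [hgmass, Finset.sum_const, nsmul_eq_mul]
  set S := (K : ENNReal) * M with hS
  have hSnt : S ≠ ⊤ := ENNReal.mul_ne_top (ENNReal.natCast_ne_top K) hMnt
  have hSpos : 0 < S := ENNReal.mul_pos (by
      simp only [ne_eq, Nat.cast_eq_zero]
      omega) hMpos.ne'
  have hs : 0 < S.toReal := ENNReal.toReal_pos hSpos.ne' hSnt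
  refine ⟨fun y => (σ y).toReal / S.toReal, fun y => by positivity, ?_, ?_⟩
  · have h := ENNReal.hasSum_toReal (f := σ) (by rw [hσmass]; exact hSnt)
    have h2 : ∑' y, (σ y).toReal = S.toReal := by
      rw [← ENNReal.tsum_toReal_eq hσnt, hσmass]
    rw [h2] at h
    have h3 := h.div_const S.toReal
    rwa [div_self hs.ne'] at h3
  · intro y
    have hsum_ne : ∑' z, σ z * ENNReal.ofReal (p z y) ≠ ⊤ := by
      rw [hσstep y]; exact hσnt y
    have h := ENNReal.hasSum_toReal hsum_ne
    have h2 : ∑' z, (σ z * ENNReal.ofReal (p z y)).toReal = (σ y).toReal := by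
      rw [← ENNReal.tsum_toReal_eq fun z => ENNReal.mul_ne_top (hσnt z) ENNReal.ofReal_ne_top,
        hσstep y]
    rw [h2] at h
    have h3 := h.div_const S.toReal
    have hfe : (fun z => (σ z).toReal / S.toReal * p z y)
        = fun z => (σ z * ENNReal.ofReal (p z y)).toReal / S.toReal := by
      funext z
      simp only [ENNReal.toReal_mul, ENNReal.toReal_ofReal (hp_nonneg z y)]
      ring
    rw [hfe]
    exact h3
end

section
/- Let J ≥ 1 be an integer and A a finite nonempty set (of customer classes). Let r : Fin J × Fin J → ℝ with r(m,n) ≥ 0 and ∑_n r(m,n) ≤ 1 for each m; let λ > 0, μ > 0, and q : A × Fin J → ℝ with q(α,j) ≥ 0. Suppose Γ : Fin J × Fin J → ℝ satisfies Γ(m, j) = δ_{m,j} + ∑_{l} r(m,l) Γ(l, j) for all m, j, and Λ : A × Fin J → ℝ satisfies Λ(α, j) = λ q(α,j) + ∑_{k} Λ(α,k) r(k,j) for all α, j. Then for every state x : A × Fin J → ℕ (x(α,m) being the number of class-α customers at server m) and every server j, ∑_{α} ∑_{k} λ q(α,k) Γ(k, j) + μ ∑_{m : ∑_α x(α,m)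 > 0} ( ∑_{n} r(m,n) Γ(n, j) − Γ(m, j) ) = ∑_{α} Λ(α, j) − μ · 1{∑_α x(α,j) > 0}. (This identity shows that the one-step drift Q·ΔV_j(x) of the virtual-workload Lyapunov function V_j(x) = ∑_α ∑_k x(α,k) Γ(k,j) in the uniformized chain equals ∑_α Λ(α,j) − μ when server j is nonempty and ∑_α Λ(α,j) when it is empty.) -/
open scoped BigOperators Classical

/-- Drift identity for the virtual-workload Lyapunov function
`V_j(x) = ∑_α ∑_k x(α,k) Γ(k,j)` in the uniformized single-service-rate
multiclass network: the arrival and routing/departure contributions add up to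
`∑_α Λ(α,j) − μ · 1{server j nonempty}`. -/
theorem virtual_workload_drift_identity
    (J : ℕ) (hJ : 1 ≤ J)
    (A : Type*) [Fintype A] [Nonempty A]
    (r : Fin J → Fin J → ℝ)
    (hr_nonneg : ∀ m n, 0 ≤ r m n)
    (hr_sub : ∀ m, ∑ n, r m n ≤ 1)
    (lam μ : ℝ) (hlam : 0 < lam) (hμ : 0 < μ)
    (q : A → Fin J → ℝ)
    (hq_nonneg : ∀ α j, 0 ≤ q α j)
    (Γ : Fin J → Fin J → ℝ)
    (hΓ : ∀ m j, Γ m j = (if m = j then (1 : ℝ) else 0) + ∑ l, r m l * Γ l j)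
    (Λ : A → Fin J → ℝ)
    (hΛ : ∀ α j, Λ α j = lam * q α j + ∑ k, Λ α k * r k j) :
    ∀ (x : A × Fin J → ℕ) (j : Fin J),
      (∑ α : A, ∑ k, lam * q α k * Γ k j) +
        μ * (∑ m ∈ Finset.univ.filter (fun m : Fin J => 0 < ∑ α : A, x (α, m)),
          ((∑ n, r m n * Γ n j) - Γ m j)) =
      (∑ α : A, Λ α j) - μ * (if 0 < ∑ α : A, x (α, j) then (1 : ℝ) else 0) := by
  intro x j
  have key1 : ∀ α : A, ∑ k, lam * q α k * Γ k j = Λ α j := by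
    intro α
    have h1 : ∀ k, lam * q α k = Λ α k - ∑ l, Λ α l * r l k := by
      intro k; have := hΛ α k; linarith
    calc ∑ k, lam * q α k * Γ k j
        = ∑ k, (Λ α k - ∑ l, Λ α l * r l k) * Γ k j := by
          refine Finset.sum_congr rfl fun k _ => ?_; rw [h1]
      _ = ∑ k, Λ α k * Γ k j - ∑ k, (∑ l, Λ α l * r l k) * Γ k j := by
          rw [← Finset.sum_sub_distrib]
          exact Finset.sum_congr rfl fun k _ => by ring
      _ = ∑ k, Λ α k * Γ k j - ∑ l, Λ α l * (∑ k, r l k * Γ k j) := by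
          congr 1
          have e : ∑ k, (∑ l, Λ α l * r l k) * Γ k j
              = ∑ k, ∑ l, Λ α l * (r l k * Γ k j) := by
            refine Finset.sum_congr rfl fun k _ => ?_
            rw [Finset.sum_mul]
            exact Finset.sum_congr rfl fun l _ => by ring
          rw [e, Finset.sum_comm]
          exact Finset.sum_congr rfl fun l _ => by rw [Finset.mul_sum]
      _ = Λ α j := by
          have h2 : ∀ l, (∑ k, r l k * Γ k j) = Γ l j - (if l = j then (1:ℝ) else 0) := by
            intro l; have := hΓ l j; linarith
          have h4 : ∑ l, Λ α l * (∑ k, r l k * Γ k j)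
              = (∑ l, Λ α l * Γ l j) - Λ α j := by
            calc ∑ l, Λ α l * (∑ k, r l k * Γ k j)
                = ∑ l, (Λ α l * Γ l j - if l = j then Λ α l else 0) := by
                  refine Finset.sum_congr rfl fun l _ => ?_
                  rw [h2 l]
                  by_cases h : l = j <;> simp [h] <;> ring
              _ = (∑ l, Λ α l * Γ l j) - Λ α j := by
                  rw [Finset.sum_sub_distrib,
                    Finset.sum_ite_eq' Finset.univ j (fun l => Λ α l)]
                  simp
          rw [h4]; ring
  have key2 : ∀ m : Fin J, (∑ n, r m n * Γ n j) - Γ m j = -(if m = j then (1:ℝ) else 0) := by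
    intro m; have := hΓ m j; linarith
  have key3 : ∑ m ∈ Finset.univ.filter (fun m : Fin J => 0 < ∑ α : A, x (α, m)),
      ((∑ n, r m n * Γ n j) - Γ m j)
      = -(if 0 < ∑ α : A, x (α, j) then (1:ℝ) else 0) := by
    rw [Finset.sum_congr rfl (fun m _ => key2 m)]
    by_cases hj : 0 < ∑ α : A, x (α, j)
    · simp only [hj, if_true]
      have hjmem : j ∈ Finset.univ.filter (fun m : Fin J => 0 < ∑ α : A, x (α, m)) := by
        simpa using hj
      rw [Finset.sum_eq_single_of_mem j hjmem]
      · simp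
      · intro m _ hm; simp [hm]
    · simp only [hj, if_false, neg_zero]
      refine Finset.sum_eq_zero fun m hm => ?_
      simp only [Finset.mem_filter] at hm
      have hne : m ≠ j := by rintro rfl; exact hj hm.2
      simp [hne]
  rw [key3, Finset.sum_congr rfl (fun α _ => key1 α)]
  ring
end
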